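/- If T is a tree of order n ≥ 1, then the restrained domination number satisfies γ_r(T) ≥ ⌈(n + 2)/3⌉. -/

import Mathlib

open Finset

/-- A set `S` of vertices is a `(k,k',k'')`-dominating set if every vertex in `S` has at
least `k` neighbors in `S`, and every vertex not in `S` has at least `k'` neighbors in `S`
and at least `k''` neighbors outside `S`. -/
def SimpleGraph.IsKkkDomSet {V : Type*} [Fintype V] [DecidableEq V] (G : SimpleGraph V)
    [DecidableRel G.Adj] (k k' k'' : ℕ) (S : Finset V) : Prop :=
  (∀ v ∈ S, k ≤ (G.neighborFinset v ∩ S).card) ∧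
  (∀ v ∉ S, k' ≤ (G.neighborFinset v ∩ S).card ∧ k'' ≤ (G.neighborFinset v \ S).card)

/-- The `(k,k',k'')`-domination number: the minimum cardinality of a
`(k,k',k'')`-dominating set. -/
noncomputable def SimpleGraph.kkkDomNum {V : Type*} [Fintype V] [DecidableEq V]
    (G : SimpleGraph V) [DecidableRel G.Adj] (k k' k'' : ℕ) : ℕ :=
  sInf {n | ∃ S : Finset V, G.IsKkkDomSet k k' k'' S ∧ S.card = n}


/-!
Let `S` be a restrained dominating set of a tree `T` on `n` vertices and `A` its complement.
Every `v ∈ A` picks an edge to `S` and an edge into `A`. The first kind of edge determines `v`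
(its other end lies in `S`), an edge of the second kind is picked by at most its two ends, and
no edge is of both kinds. Hence `T` has at least `|A| + |A| / 2` edges, so
`3 (n - |S|) ≤ 2 (n - 1)`, i.e. `n + 2 ≤ 3 |S|`.
-/

namespace Sym2

variable {α : Type*} {A : Finset α}

theorem injOn_mk_of_forall_notMem {p : α → α} (hp : ∀ v ∈ A, p v ∉ A) :
    Set.InjOn (fun v => s(v, p v)) A := by
  intro v hv w hw hvw
  rcases Sym2.eq_iff.mp hvw with ⟨rfl, -⟩ | ⟨-, hpv⟩
  · rfl
  · exact absurd (hpv ▸ hw) (hp v hv)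

theorem card_le_two_mul_card_image_mk [DecidableEq α] (q : α → α) :
    #A ≤ 2 * #(A.image fun v => s(v, q v)) := by
  refine card_le_mul_card_image A 2 fun e _ => ?_
  induction e using Sym2.ind with
  | _ x y =>
    calc #{v ∈ A | s(v, q v) = s(x, y)} ≤ #({x, y} : Finset α) := by
          refine card_le_card fun v hv => ?_
          have hmem : v ∈ s(x, y) := (mem_filter.mp hv).2 ▸ Sym2.mem_mk_left v (q v)
          rcases Sym2.mem_iff.mp hmem with rfl | rfl <;> simp
      _ ≤ 2 := card_le_two

theorem disjoint_image_mk [DecidableEq α] {p q : α → α} (hp : ∀ v ∈ A, p v ∉ A)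
    (hq : ∀ v ∈ A, q v ∈ A) :
    Disjoint (A.image fun v => s(v, p v)) (A.image fun v => s(v, q v)) := by
  simp only [disjoint_left, mem_image, not_exists, not_and, forall_exists_index, and_imp,
    forall_apply_eq_imp_iff₂]
  intro v hv w hw hvw
  rcases Sym2.eq_iff.mp hvw with ⟨-, hqw⟩ | ⟨hwp, -⟩
  · exact hp v hv (hqw ▸ hq w hw)
  · exact hp v hv (hwp ▸ hw)

theorem three_mul_card_le_two_mul_card_image_union [DecidableEq α] {p q : α → α}
    (hp : ∀ v ∈ A, p v ∉ A) (hq : ∀ v ∈ A, q v ∈ A) :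
    3 * #A ≤ 2 * #((A.image fun v => s(v, p v)) ∪ A.image fun v => s(v, q v)) := by
  rw [card_union_of_disjoint (disjoint_image_mk hp hq), card_image_of_injOn
    (injOn_mk_of_forall_notMem hp)]
  linarith [card_le_two_mul_card_image_mk (A := A) q]

end Sym2

namespace SimpleGraph

variable {V : Type*} [Fintype V] [DecidableEq V] {G : SimpleGraph V} [DecidableRel G.Adj]

theorem isKkkDomSet_univ (k' k'' : ℕ) : G.IsKkkDomSet 0 k' k'' univ :=
  ⟨fun _ _ => Nat.zero_le _, fun v hv => absurd (mem_univ v) hv⟩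

theorem exists_isKkkDomSet_card_eq_kkkDomNum (k' k'' : ℕ) :
    ∃ S, G.IsKkkDomSet 0 k' k'' S ∧ #S = G.kkkDomNum 0 k' k'' :=
  Nat.sInf_mem (s := {n | ∃ S, G.IsKkkDomSet 0 k' k'' S ∧ #S = n})
    ⟨_, univ, isKkkDomSet_univ k' k'', rfl⟩

theorem IsKkkDomSet.three_mul_card_compl_le {S : Finset V} (hS : G.IsKkkDomSet 0 1 1 S) :
    3 * #Sᶜ ≤ 2 * #G.edgeFinset := by
  have hnbr : ∀ v ∈ Sᶜ, ∃ p q, (G.Adj v p ∧ p ∈ S) ∧ (G.Adj v q ∧ q ∉ S) := by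
    intro v hv
    obtain ⟨hin, hout⟩ := hS.2 v (mem_compl.mp hv)
    obtain ⟨p, hp⟩ := card_pos.mp hin
    obtain ⟨q, hq⟩ := card_pos.mp hout
    simp only [mem_inter, mem_sdiff, mem_neighborFinset] at hp hq
    exact ⟨p, q, hp, hq⟩
  choose! p q hp hq using hnbr
  refine (Sym2.three_mul_card_le_two_mul_card_image_union (A := Sᶜ) (p := p) (q := q)
    (fun v hv => by simpa using (hp v hv).2) (fun v hv => mem_compl.mpr (hq v hv).2)).trans ?_
  gcongr
  refine union_subset ?_ ?_ <;> simp only [subset_iff, mem_image, mem_edgeFinset] <;>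
    rintro _ ⟨v, hv, rfl⟩
  exacts [(hp v hv).1, (hq v hv).1]

theorem IsTree.card_add_two_le_three_mul_card (hG : G.IsTree) {S : Finset V}
    (hS : G.IsKkkDomSet 0 1 1 S) :
    Fintype.card V + 2 ≤ 3 * #S := by
  have hcompl := hS.three_mul_card_compl_le
  have hedges := hG.card_edgeFinset
  rw [card_compl] at hcompl
  have := card_le_univ S
  omega

end SimpleGraph

theorem stmt_16_general {V : Type*} [Fintype V] [DecidableEq V] (T : SimpleGraph V)
    [DecidableRel T.Adj] (htree : T.IsTree) :
    (⌈((Fintype.card V : ℚ) + 2) / 3⌉ : ℤ) ≤ (T.kkkDomNum 0 1 1 : ℤ) := by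
  obtain ⟨S, hS, hcard⟩ := T.exists_isKkkDomSet_card_eq_kkkDomNum 1 1
  have hbound := htree.card_add_two_le_three_mul_card hS
  rw [Int.ceil_le, div_le_iff₀ three_pos, ← hcard]
  exact_mod_cast (by omega : Fintype.card V + 2 ≤ #S * 3)

/-- If T is a tree of order n ≥ 1, then γ_r(T) = γ_{(0,1,1)}(T) ≥ ⌈(n+2)/3⌉. -/
theorem stmt_16 {V : Type*} [Fintype V] [DecidableEq V] (T : SimpleGraph V)
    [DecidableRel T.Adj] (htree : T.IsTree) (hn : 1 ≤ Fintype.card V) :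
    (⌈((Fintype.card V : ℚ) + 2) / 3⌉ : ℤ) ≤ (T.kkkDomNum 0 1 1 : ℤ) :=
  stmt_16_general T htree
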